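/- For every x ∈ Ω, every 1 ≤ i ≤ r, and every r×r real symmetric matrix y, the directional derivative d/dt|_{t=0} [ Δ*_{i−1}(x+ty)/Δ*_i(x+ty) ] exists and equals ( Δ*_{i−1}(x)/Δ*_i(x) )·tr( [ (P*_{i−1}(x))^{−1} − (P*_i(x))^{−1} ]·y ). -/

import Mathlib

open MeasureTheory Matrix

noncomputable section

instance (r : ℕ) : MeasurableSpace (Matrix (Fin r) (Fin r) ℝ) :=
  inferInstanceAs (MeasurableSpace (Fin r → Fin r → ℝ))

/-- The modified Bessel function of the first kind,
`I(α, z) = ∑_{k=0}^∞ (z/2)^{2k+α}/(k!·Γ(k+α+1))`. -/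
def besselI (α z : ℝ) : ℝ :=
  ∑' k : ℕ, (z / 2) ^ (2 * (k : ℝ) + α) / ((k.factorial : ℝ) * Real.Gamma ((k : ℝ) + α + 1))

/-- Embedding of `Fin k` into `Fin r` as the first `k` indices. -/
def leadEmb (r k : ℕ) (h : k ≤ r) : Fin k → Fin r :=
  fun j => ⟨j.val, lt_of_lt_of_le j.isLt h⟩

/-- Embedding of `Fin k` into `Fin r` as the last `k` indices. -/
def trailEmb (r k : ℕ) (h : k ≤ r) : Fin k → Fin r :=
  fun j => ⟨r - k + j.val, by have := j.isLt; omega⟩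

/-- `Δ_k(x)`: determinant of the leading principal `k × k` submatrix (`Δ_0 = 1`). -/
def Delta (r k : ℕ) (x : Matrix (Fin r) (Fin r) ℝ) : ℝ :=
  if h : k ≤ r then (x.submatrix (leadEmb r k h) (leadEmb r k h)).det else 0

/-- `Δ*_k(x)`: determinant of the trailing principal `k × k` submatrix (`Δ*_0 = 1`). -/
def DeltaStar (r k : ℕ) (x : Matrix (Fin r) (Fin r) ℝ) : ℝ :=
  if h : k ≤ r then (x.submatrix (trailEmb r k h) (trailEmb r k h)).det else 0

/-- The generalized power `Δ_s(x) = Δ_1(x)^{s_1-s_2} ⋯ Δ_{r-1}(x)^{s_{r-1}-s_r} Δ_r(x)^{s_r}`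
(indices of `s` are `0`-based in the formalization). -/
def GenPow (r : ℕ) (s : Fin r → ℝ) (x : Matrix (Fin r) (Fin r) ℝ) : ℝ :=
  ∏ i : Fin r,
    Delta r (i.val + 1) x ^ (s i - if h : i.val + 1 < r then s ⟨i.val + 1, h⟩ else 0)

/-- The general term (indexed by `q ∈ ℕ^r`) of the series defining the mixture density:
`λ^q · Δ_{q+ρ-(n/r,…,n/r)}(x) / (q! · (2π)^{r(r-1)/4} · Γ(q_1)⋯Γ(q_r))`.
Here `ρ = (0, 1/2, …, (r-1)/2)` and `n/r = (r+1)/2`.  Terms with some `q_i = 0` vanish,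
since `Real.Gamma 0 = 0` and division by `0` yields `0` (the convention `1/Γ(0) = 0`). -/
def mixTerm (r : ℕ) (lam : Fin r → ℝ) (x : Matrix (Fin r) (Fin r) ℝ) (q : Fin r → ℕ) : ℝ :=
  (∏ i, lam i ^ q i) *
      GenPow r (fun i => (q i : ℝ) + (i.val : ℝ) / 2 - ((r : ℝ) + 1) / 2) x /
    ((∏ i, ((q i).factorial : ℝ)) * (2 * Real.pi) ^ (((r * (r - 1) : ℕ) : ℝ) / 4) *
      ∏ i, Real.Gamma ((q i : ℝ)))

/-- The mixture density `h(x) = e^{-(λ_1+⋯+λ_r)} e^{-tr x} ∑_{q} mixTerm q`. -/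
def mixDensity (r : ℕ) (lam : Fin r → ℝ) (x : Matrix (Fin r) (Fin r) ℝ) : ℝ :=
  Real.exp (-∑ i, lam i) * Real.exp (-x.trace) * ∑' q : Fin r → ℕ, mixTerm r lam x q

/-- `Ω`: the open cone of symmetric positive definite real `r × r` matrices. -/
def PDCone (r : ℕ) : Set (Matrix (Fin r) (Fin r) ℝ) := {x | x.IsSymm ∧ x.PosDef}

/-- Coordinates on symmetric matrices: the entries `x_{ij}`, `i ≤ j`. -/
abbrev SymIdx (r : ℕ) := {p : Fin r × Fin r // p.1 ≤ p.2}

/-- The symmetric matrix with prescribed entries `x_{ij}`, `i ≤ j`. -/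
def symOfCoords (r : ℕ) (f : SymIdx r → ℝ) : Matrix (Fin r) (Fin r) ℝ :=
  Matrix.of fun i j => if h : i ≤ j then f ⟨(i, j), h⟩ else f ⟨(j, i), (le_total i j).resolve_left h⟩

/-- The Lebesgue measure on the space of symmetric `r × r` matrices, normalized so that it is
the Euclidean measure associated with the trace inner product `⟨x,y⟩ = tr(xy)`
(an orthonormal basis is `{c_ii} ∪ {(e_ij+e_ji)/√2 : i<j}`, whence the factor `√2^{r(r-1)/2}`
relative to the coordinates `x_{ij}`, `i ≤ j`). -/
def lebSym (r : ℕ) : Measure (Matrix (Fin r) (Fin r) ℝ) :=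
  ENNReal.ofReal (Real.sqrt 2 ^ (r * (r - 1) / 2)) • Measure.map (symOfCoords r) volume

/-- The Laplace transform `L_μ(θ) = ∫_Ω e^{tr(θx)} h(x) dx` of the mixture. -/
def mixLaplace (r : ℕ) (lam : Fin r → ℝ) (θ : Matrix (Fin r) (Fin r) ℝ) : ℝ :=
  ∫ x in PDCone r, Real.exp ((θ * x).trace) * mixDensity r lam x ∂lebSym r

/-- `P_θ`: the probability measure on `Ω` with Lebesgue density
`e^{tr(θx)} h(x) / L_μ(θ)`. -/
def mixNEF (r : ℕ) (lam : Fin r → ℝ) (θ : Matrix (Fin r) (Fin r) ℝ) :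
    Measure (Matrix (Fin r) (Fin r) ℝ) :=
  ((lebSym r).restrict (PDCone r)).withDensity fun x =>
    ENNReal.ofReal (Real.exp ((θ * x).trace) * mixDensity r lam x / mixLaplace r lam θ)

/-- The mean `m(θ) = ∫_Ω x dP_θ(x)` (computed entrywise). -/
def mixMean (r : ℕ) (lam : Fin r → ℝ) (θ : Matrix (Fin r) (Fin r) ℝ) :
    Matrix (Fin r) (Fin r) ℝ :=
  Matrix.of fun i j => ∫ x, x i j ∂mixNEF r lam θ

/-- `(P*_k(x))⁻¹`: the `r × r` symmetric matrix whose trailing `k × k` block is the inverse of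
the trailing principal `k × k` submatrix of `x`, all other entries being `0`
(`(P*_0(x))⁻¹ = 0`). -/
def PstarInv (r k : ℕ) (x : Matrix (Fin r) (Fin r) ℝ) : Matrix (Fin r) (Fin r) ℝ :=
  if h : k ≤ r then
    Matrix.of fun i j =>
      if hij : r - k ≤ i.val ∧ r - k ≤ j.val then
        (x.submatrix (trailEmb r k h) (trailEmb r k h))⁻¹
          ⟨i.val - (r - k), by have := i.isLt; omega⟩
          ⟨j.val - (r - k), by have := j.isLt; omega⟩
      else 0
  else 0

/-- `b_i(m) = (i-1)/4 + √(((i-1)/4)² + λ_i Δ_i(m)/Δ_{i-1}(m))` (`i : Fin r` is `0`-based,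
so `(i-1)` in the `1`-based notation reads `i.val` here). -/
def bFun (r : ℕ) (lam : Fin r → ℝ) (i : Fin r) (m : Matrix (Fin r) (Fin r) ℝ) : ℝ :=
  (i.val : ℝ) / 4 +
    Real.sqrt (((i.val : ℝ) / 4) ^ 2 + lam i * (Delta r (i.val + 1) m / Delta r i.val m))

/-! Both trailing minors are determinants of principal blocks of `x + t • y`, so Jacobi's formula
`d/dt det (A + t B) = det A · tr (A⁻¹ B)` gives their derivatives at `t = 0`. The trace
`tr ((P*_k x)⁻¹ y)` only sees the trailing `k × k` block of `y`, hence equals `tr (A⁻¹ B)` for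
the trailing blocks `A`, `B` of `x`, `y`. Positive definiteness makes the minors nonzero, and the
quotient rule gives the formula. -/

open Polynomial in
theorem Matrix.hasDerivAt_det_one_add_smul {𝕜 n : Type*} [NontriviallyNormedField 𝕜] [Fintype n]
    [DecidableEq n] (M : Matrix n n 𝕜) :
    HasDerivAt (fun t : 𝕜 => (1 + t • M).det) M.trace 0 := by
  have h := (det (1 + (X : 𝕜[X]) • M.map C)).hasDerivAt 0
  rw [derivative_det_one_add_X_smul] at h
  convert h using 1
  funext t
  simp [eval_det, ← smul_eq_mul_diagonal]

theorem Matrix.hasDerivAt_det_add_smul {𝕜 n : Type*} [NontriviallyNormedField 𝕜] [Fintype n]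
    [DecidableEq n] {A : Matrix n n 𝕜} (hA : IsUnit A.det) (B : Matrix n n 𝕜) :
    HasDerivAt (fun t : 𝕜 => (A + t • B).det) (A.det * (A⁻¹ * B).trace) 0 := by
  have hfactor : ∀ t : 𝕜, A + t • B = A * (1 + t • (A⁻¹ * B)) := fun t => by
    rw [mul_add, mul_one, Matrix.mul_smul, ← Matrix.mul_assoc, mul_nonsing_inv A hA, one_mul]
  simpa only [hfactor, det_mul] using (hasDerivAt_det_one_add_smul (A⁻¹ * B)).const_mul A.det

theorem trailEmb_injective {r k : ℕ} (h : k ≤ r) : Function.Injective (trailEmb r k h) :=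
  fun a b hab => Fin.ext (by simpa [trailEmb] using congrArg Fin.val hab)

theorem mem_range_trailEmb {r k : ℕ} (h : k ≤ r) {j : Fin r} :
    j ∈ Set.range (trailEmb r k h) ↔ r - k ≤ j.val := by
  refine ⟨?_, fun hj => ⟨⟨j.val - (r - k), by omega⟩, Fin.ext (by simp [trailEmb]; omega)⟩⟩
  rintro ⟨a, rfl⟩
  simp [trailEmb]

theorem deltaStar_eq_det {r k : ℕ} (h : k ≤ r) (x : Matrix (Fin r) (Fin r) ℝ) :
    DeltaStar r k x = (x.submatrix (trailEmb r k h) (trailEmb r k h)).det :=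
  dif_pos h

theorem deltaStar_pos {r k : ℕ} (h : k ≤ r) {x : Matrix (Fin r) (Fin r) ℝ} (hx : x.PosDef) :
    0 < DeltaStar r k x := by
  rw [deltaStar_eq_det h]
  exact (hx.submatrix (trailEmb_injective h)).det_pos

theorem pstarInv_apply_trailEmb {r k : ℕ} (h : k ≤ r) (x : Matrix (Fin r) (Fin r) ℝ)
    (a b : Fin k) :
    PstarInv r k x (trailEmb r k h a) (trailEmb r k h b) =
      (x.submatrix (trailEmb r k h) (trailEmb r k h))⁻¹ a b := by
  rw [PstarInv, dif_pos h, of_apply, dif_pos (by simp [trailEmb])]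
  simp [trailEmb]

theorem pstarInv_apply_of_notMem_range {r k : ℕ} (h : k ≤ r) (x : Matrix (Fin r) (Fin r) ℝ)
    {j l : Fin r} (hjl : j ∉ Set.range (trailEmb r k h) ∨ l ∉ Set.range (trailEmb r k h)) :
    PstarInv r k x j l = 0 := by
  simp only [mem_range_trailEmb] at hjl
  rw [PstarInv, dif_pos h, of_apply, dif_neg (by omega)]

theorem trace_pstarInv_mul {r k : ℕ} (h : k ≤ r) (x y : Matrix (Fin r) (Fin r) ℝ) :
    (PstarInv r k x * y).trace =
      ((x.submatrix (trailEmb r k h) (trailEmb r k h))⁻¹ *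
        (y.submatrix (trailEmb r k h) (trailEmb r k h))).trace := by
  have he := trailEmb_injective h
  simp only [trace, diag_apply, mul_apply, submatrix_apply]
  refine (Fintype.sum_of_injective _ he _ _ (fun j hj => ?_) fun a => ?_).symm
  · exact Finset.sum_eq_zero fun l _ => by
      rw [pstarInv_apply_of_notMem_range h x (.inl hj), zero_mul]
  · refine Fintype.sum_of_injective _ he _ _ (fun l hl => ?_) fun b => ?_
    · rw [pstarInv_apply_of_notMem_range h x (.inr hl), zero_mul]
    · rw [pstarInv_apply_trailEmb]

theorem hasDerivAt_deltaStar_add_smul {r k : ℕ} (h : k ≤ r) {x : Matrix (Fin r) (Fin r) ℝ}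
    (hx : DeltaStar r k x ≠ 0) (y : Matrix (Fin r) (Fin r) ℝ) :
    HasDerivAt (fun t : ℝ => DeltaStar r k (x + t • y))
      (DeltaStar r k x * (PstarInv r k x * y).trace) 0 := by
  rw [deltaStar_eq_det h] at hx
  simp only [deltaStar_eq_det h, trace_pstarInv_mul h]
  exact hasDerivAt_det_add_smul hx.isUnit (y.submatrix (trailEmb r k h) (trailEmb r k h))

theorem stmt12_general (r : ℕ) (x : Matrix (Fin r) (Fin r) ℝ) (hx : x ∈ PDCone r)
    (i : Fin r) (y : Matrix (Fin r) (Fin r) ℝ) :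
    HasDerivAt
      (fun t : ℝ => DeltaStar r i.val (x + t • y) / DeltaStar r (i.val + 1) (x + t • y))
      (DeltaStar r i.val x / DeltaStar r (i.val + 1) x *
        ((PstarInv r i.val x - PstarInv r (i.val + 1) x) * y).trace) 0 := by
  have hi : i.val ≤ r := i.isLt.le
  have hi' : i.val + 1 ≤ r := i.isLt
  have hpos := deltaStar_pos hi hx.2
  have hpos' := deltaStar_pos hi' hx.2
  have hquot := (hasDerivAt_deltaStar_add_smul hi hpos.ne' y).fun_div
    (hasDerivAt_deltaStar_add_smul hi' hpos'.ne' y) (by simpa using hpos'.ne')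
  simp only [zero_smul, add_zero] at hquot
  refine hquot.congr_deriv ?_
  rw [sub_mul, trace_sub]
  field_simp

/-- For `x ∈ Ω`, `1 ≤ i ≤ r` and symmetric `y`, the directional derivative of
`x ↦ Δ*_{i-1}(x)/Δ*_i(x)` in the direction `y` exists and equals
`(Δ*_{i-1}(x)/Δ*_i(x)) · tr([(P*_{i-1}(x))⁻¹ - (P*_i(x))⁻¹] y)`. -/
theorem stmt12 (r : ℕ) (hr : 1 ≤ r) (x : Matrix (Fin r) (Fin r) ℝ) (hx : x ∈ PDCone r)
    (i : Fin r) (y : Matrix (Fin r) (Fin r) ℝ) (hy : y.IsSymm) :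
    HasDerivAt
      (fun t : ℝ => DeltaStar r i.val (x + t • y) / DeltaStar r (i.val + 1) (x + t • y))
      (DeltaStar r i.val x / DeltaStar r (i.val + 1) x *
        ((PstarInv r i.val x - PstarInv r (i.val + 1) x) * y).trace) 0 :=
  stmt12_general r x hx i y
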